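/- arXiv:1310.6776 — 4 statements merged into one kernel-verified Lean document; each statement's English description precedes it below -/
import Mathlib

section
/- For every n ≥ 1, the edge set of Q_n can be partitioned into 2^(n-1) paths of length n, each joining a pair of antipodal vertices. -/
/-!
The path from `q` flips the coordinates `0, 1, …, n - 1` in turn, so its `j`-th edge joins
`q + 1_{<j}` to `q + 1_{<j} + e_j`, where `1_{<j}` is the indicator of the first `j`
coordinates. Hence an edge `{a, a + e_j}` of `Q n` lies on the path from `q` exactly when `q` is
`a + 1_{<j}` or `a + e_j + 1_{<j}`. These two candidates have opposite parity, so exactly one of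
them is an even-weight vertex, and there are `2 ^ (n - 1)` of those since they form the kernel of
the surjective parity map `(ZMod 2)ⁿ → ZMod 2`.
-/

/-- The `n`-dimensional hypercube graph on `{0,1}^n`: two vertices are adjacent
iff they differ in exactly one coordinate. -/
def Q (n : ℕ) : SimpleGraph (Fin n → ZMod 2) where
  Adj x y := hammingDist x y = 1
  symm := ⟨fun x y h => by simpa [hammingDist_comm] using h⟩
  loopless := ⟨fun x h => by simp [hammingDist_self] at h⟩

open Finset

namespace SimpleGraph.Walk

variable {V : Type*} {G : SimpleGraph V}

def ofSeq (f : ℕ → V) :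
    (m : ℕ) → (∀ k < m, G.Adj (f k) (f (k + 1))) → G.Walk (f 0) (f m)
  | 0, _ => nil
  | m + 1, h =>
    (ofSeq f m fun k hk => h k (hk.trans m.lt_succ_self)).concat (h m m.lt_succ_self)

variable (f : ℕ → V)

theorem length_ofSeq (m : ℕ) (h : ∀ k < m, G.Adj (f k) (f (k + 1))) :
    (ofSeq f m h).length = m := by
  induction m with
  | zero => rfl
  | succ m ih => simp [ofSeq, ih]

theorem support_ofSeq (m : ℕ) (h : ∀ k < m, G.Adj (f k) (f (k + 1))) :
    (ofSeq f m h).support = (List.range (m + 1)).map f := by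
  induction m with
  | zero => rfl
  | succ m ih => simp [ofSeq, ih, List.range_succ (n := m + 1)]

theorem edges_ofSeq (m : ℕ) (h : ∀ k < m, G.Adj (f k) (f (k + 1))) :
    (ofSeq f m h).edges = (List.range m).map fun k => s(f k, f (k + 1)) := by
  induction m with
  | zero => rfl
  | succ m ih => simp [ofSeq, ih, List.range_succ]

theorem isPath_ofSeq {m : ℕ} (h : ∀ k < m, G.Adj (f k) (f (k + 1)))
    (hf : Set.InjOn f (Set.Iic m)) : (ofSeq f m h).IsPath := by
  rw [isPath_def, support_ofSeq]
  refine List.nodup_range.map_on fun a ha b hb hab => hf ?_ ?_ hab <;>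
    simp_all

end SimpleGraph.Walk

namespace ZModModule

variable {M : Type*} [AddCommGroup M] [Module (ZMod 2) M]

theorem sym2_mk_add_eq_iff {x y u v : M} :
    s(x, x + u) = s(y, y + v) ↔ u = v ∧ (x = y ∨ x = y + v) := by
  rw [Sym2.eq_iff]
  constructor
  · rintro (⟨rfl, h⟩ | ⟨rfl, h⟩)
    · exact ⟨add_left_cancel h, Or.inl rfl⟩
    · rw [add_assoc, add_eq_left, add_eq_zero_iff_neg_eq, neg_eq_self] at h
      exact ⟨h.symm, Or.inr rfl⟩
  · rintro ⟨rfl, rfl | rfl⟩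
    · exact Or.inl ⟨rfl, rfl⟩
    · exact Or.inr ⟨rfl, by rw [add_assoc, add_self, add_zero]⟩

end ZModModule

namespace Hypercube

open SimpleGraph

variable {n : ℕ}

theorem single_one_inj {j k : Fin n} :
    (Pi.single k 1 : Fin n → ZMod 2) = Pi.single j 1 ↔ k = j := by
  refine ⟨fun h => ?_, fun h => h ▸ rfl⟩
  by_contra hkj
  simpa [hkj] using congrFun h k

theorem hammingNorm_eq_one_iff (v : Fin n → ZMod 2) :
    hammingNorm v = 1 ↔ ∃ j, v = Pi.single j 1 := by
  have hcoord (a : ZMod 2) (p : Prop) [Decidable p] :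
      (a ≠ 0 ↔ p) ↔ a = if p then 1 else 0 := by
    split_ifs with hp
    · simp only [hp, iff_true]
      revert a; decide
    · simp only [hp, iff_false, not_not]
  simp only [hammingNorm, card_eq_one, Finset.ext_iff, mem_filter, mem_univ, true_and,
    mem_singleton, funext_iff, Pi.single_apply, hcoord]

theorem adj_iff_exists_eq_add_single (x y : Fin n → ZMod 2) :
    (Q n).Adj x y ↔ ∃ j, y = x + Pi.single j 1 := by
  obtain ⟨v, rfl⟩ : ∃ v, y = x + v := ⟨y - x, (add_sub_cancel x y).symm⟩
  change hammingDist x (x + v) = 1 ↔ _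
  rw [hammingDist_eq_hammingNorm, neg_add_cancel_left, hammingNorm_eq_one_iff]
  simp only [add_right_inj]

def parity (n : ℕ) : (Fin n → ZMod 2) →+ ZMod 2 where
  toFun x := ∑ i, x i
  map_zero' := by simp
  map_add' _ _ := sum_add_distrib

theorem parity_add_single (x : Fin n → ZMod 2) (j : Fin n) :
    parity n (x + Pi.single j 1) = parity n x + 1 := by
  rw [map_add]
  simp [parity]

theorem card_ker_parity (hn : 1 ≤ n) : Nat.card (parity n).ker = 2 ^ (n - 1) := by
  have hsurj : Function.Surjective (parity n) := fun b =>
    ⟨Pi.single ⟨0, hn⟩ b, by simp [parity]⟩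
  have hcard := (parity n).ker.card_mul_index
  rw [AddSubgroup.index_ker, AddMonoidHom.range_eq_top.2 hsurj, AddSubgroup.card_top,
    Nat.card_fun, Nat.card_zmod, Nat.card_fin, ← Nat.pow_pred_mul hn] at hcard
  exact Nat.eq_of_mul_eq_mul_right two_pos hcard

theorem existsUnique_ker_parity_eq_or_eq {x y : Fin n → ZMod 2}
    (hxy : parity n y = parity n x + 1) :
    ∃! q : (parity n).ker, (q : Fin n → ZMod 2) = x ∨ (q : Fin n → ZMod 2) = y := by
  obtain hx | hx : parity n x = 0 ∨ parity n x = 1 := by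
    generalize parity n x = a; revert a; decide
  · refine ⟨⟨x, hx⟩, Or.inl rfl, ?_⟩
    rintro ⟨q, hq⟩ (rfl | rfl)
    · rfl
    · simp [AddMonoidHom.mem_ker, hxy, hx] at hq
  · have hy : parity n y = 0 := by rw [hxy, hx]; decide
    refine ⟨⟨y, hy⟩, Or.inr rfl, ?_⟩
    rintro ⟨q, hq⟩ (rfl | rfl)
    · simp [AddMonoidHom.mem_ker, hx] at hq
    · rfl

def flipFirst (q : Fin n → ZMod 2) (j : ℕ) : Fin n → ZMod 2 :=
  fun i => q i + if (i : ℕ) < j then 1 else 0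

theorem flipFirst_zero (q : Fin n → ZMod 2) : flipFirst q 0 = q := by
  ext i; simp [flipFirst]

theorem flipFirst_succ (q : Fin n → ZMod 2) {j : ℕ} (hj : j < n) :
    flipFirst q (j + 1) = flipFirst q j + Pi.single ⟨j, hj⟩ 1 := by
  ext i
  simp only [flipFirst, Pi.add_apply, Pi.single_apply, Fin.ext_iff]
  rcases lt_trichotomy (i : ℕ) j with h | h | h
  · simp [h, h.ne, h.trans j.lt_succ_self]
  · simp [h]
  · simp [h.ne', h.not_gt, (Nat.succ_le_of_lt h).not_gt]

theorem flipFirst_eq_iff {q x : Fin n → ZMod 2} {j : ℕ} :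
    flipFirst q j = x ↔ q = flipFirst x j := by
  have hinv (y : Fin n → ZMod 2) : flipFirst (flipFirst y j) j = y := by
    ext i; simp [flipFirst, add_assoc, ZModModule.add_self]
  constructor <;> rintro rfl <;> simp [hinv]

theorem parity_flipFirst (q : Fin n → ZMod 2) {j : ℕ} (hj : j ≤ n) :
    parity n (flipFirst q j) = parity n q + j := by
  induction j with
  | zero => simp [flipFirst_zero]
  | succ j ih =>
    rw [flipFirst_succ q hj, parity_add_single, ih (Nat.le_of_succ_le hj)]
    push_cast; ring

theorem hammingDist_flipFirst (q : Fin n → ZMod 2) {j : ℕ} (hj : j ≤ n) :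
    hammingDist q (flipFirst q j) = j := by
  simp [hammingDist, flipFirst, Fin.card_filter_val_lt, hj]

theorem flipFirst_injOn (q : Fin n → ZMod 2) : Set.InjOn (flipFirst q) (Set.Iic n) :=
  fun k hk l hl h => by
    rw [← hammingDist_flipFirst q hk, ← hammingDist_flipFirst q hl, h]

def flipPath (q : Fin n → ZMod 2) : (Q n).Walk q (flipFirst q n) :=
  (Walk.ofSeq (flipFirst q) n fun _ hk =>
    (adj_iff_exists_eq_add_single _ _).2 ⟨_, flipFirst_succ q hk⟩).copy (flipFirst_zero q) rfl

theorem isPath_flipPath (q : Fin n → ZMod 2) : (flipPath q).IsPath := by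
  rw [flipPath, Walk.isPath_copy]
  exact Walk.isPath_ofSeq _ _ (flipFirst_injOn q)

theorem length_flipPath (q : Fin n → ZMod 2) : (flipPath q).length = n := by
  rw [flipPath, Walk.length_copy, Walk.length_ofSeq]

theorem mem_edges_flipPath (q a : Fin n → ZMod 2) (j : Fin n) :
    s(a, a + Pi.single j 1) ∈ (flipPath q).edges ↔
      q = flipFirst a j ∨ q = flipFirst (a + Pi.single j 1) j := by
  simp only [flipPath, Walk.edges_copy, Walk.edges_ofSeq, List.mem_map, List.mem_range]
  constructor
  · rintro ⟨k, hk, he⟩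
    rw [flipFirst_succ q hk, ZModModule.sym2_mk_add_eq_iff, single_one_inj] at he
    obtain ⟨rfl, h⟩ := he
    simpa only [flipFirst_eq_iff] using h
  · intro h
    refine ⟨j, j.is_lt, ?_⟩
    rw [flipFirst_succ q j.is_lt, ZModModule.sym2_mk_add_eq_iff]
    simpa only [flipFirst_eq_iff, true_and] using h

end Hypercube

open Hypercube in
theorem antipodal_path_decomposition (n : ℕ) (hn : 1 ≤ n) :
    ∃ (ι : Type) (u v : ι → (Fin n → ZMod 2)) (w : ∀ i : ι, (Q n).Walk (u i) (v i)),
      Nat.card ι = 2 ^ (n - 1) ∧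
      (∀ i, (w i).IsPath ∧ (w i).length = n ∧ hammingDist (u i) (v i) = n) ∧
      ∀ e ∈ (Q n).edgeSet, ∃! i, e ∈ (w i).edges := by
  refine ⟨(parity n).ker, (↑), fun q => flipFirst q n, fun q => flipPath (q : Fin n → ZMod 2),
    card_ker_parity hn, fun q => ?_, ?_⟩
  · exact ⟨isPath_flipPath _, length_flipPath (q : Fin n → ZMod 2),
      hammingDist_flipFirst (q : Fin n → ZMod 2) le_rfl⟩
  refine Sym2.ind fun a b hab => ?_
  obtain ⟨j, rfl⟩ := (adj_iff_exists_eq_add_single a b).1 hab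
  simp only [mem_edges_flipPath]
  apply existsUnique_ker_parity_eq_or_eq
  rw [parity_flipFirst _ j.is_lt.le, parity_flipFirst _ j.is_lt.le, parity_add_single]
  ring
end

section
/- The edges of the antipodal path decomposition of Q_n are pairwise distinct: if for two even-weight vertices q and q' and indices i, i' the i-th edge of the path starting at q equals the i'-th edge of the path starting at q', then q = q' and i = i'. -/
/-- The vertex obtained from  by flipping its first  coordinates. -/
def flipUpTo {n : ℕ} (q : Fin n → ZMod 2) (i : ℕ) : Fin n → ZMod 2 :=
  fun j => if (j : ℕ) < i then q j + 1 else q j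

/-- The weight of a vertex: the number of coordinates equal to 1. -/
def weight {n : ℕ} (x : Fin n → ZMod 2) : ℕ := (Finset.univ.filter fun i => x i = 1).card

lemma zmod2_cases (a : ZMod 2) : a = 0 ∨ a = 1 := by
  revert a; decide

lemma sum_eq_weight {n : ℕ} (x : Fin n → ZMod 2) : ∑ j, x j = (weight x : ZMod 2) := by
  have h1 : ∑ j ∈ Finset.univ.filter (fun j => x j = 1), x j = ∑ j, x j := by
    apply Finset.sum_filter_of_ne
    intro j _ hne
    rcases zmod2_cases (x j) with h0 | h1
    · exact absurd h0 hne
    · exact h1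
  rw [← h1, Finset.sum_congr rfl (fun j hj => (Finset.mem_filter.mp hj).2)]
  simp [weight]

lemma even_weight_iff {n : ℕ} (x : Fin n → ZMod 2) : Even (weight x) ↔ ∑ j, x j = 0 := by
  rw [sum_eq_weight, ZMod.natCast_eq_zero_iff, Nat.even_iff, Nat.dvd_iff_mod_eq_zero]

theorem antipodal_edges_distinct (n : ℕ) (q q' : Fin n → ZMod 2)
    (hq : Even (weight q)) (hq' : Even (weight q'))
    (i i' : ℕ) (hi : 1 ≤ i) (hin : i ≤ n) (hi' : 1 ≤ i') (hi'n : i' ≤ n)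
    (h : s(flipUpTo q (i - 1), flipUpTo q i) = s(flipUpTo q' (i' - 1), flipUpTo q' i')) :
    q = q' ∧ i = i' := by
  rw [Sym2.eq_iff] at h
  -- in both cases the sums of the two endpoints agree pointwise
  have hsum : ∀ j : Fin n, flipUpTo q (i-1) j + flipUpTo q i j
      = flipUpTo q' (i'-1) j + flipUpTo q' i' j := by
    rcases h with ⟨ha, hb⟩ | ⟨ha, hb⟩ <;> intro j
    · rw [ha, hb]
    · rw [ha, hb, add_comm]
  have hii' : i = i' := by
    by_contra hne
    rcases Nat.lt_or_ge i i' with hlt | hge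
    · have hkn : i - 1 < n := by omega
      have hth := hsum ⟨i-1, hkn⟩
      simp only [flipUpTo] at hth
      rw [if_neg (by omega), if_pos (by omega), if_pos (by omega),
        if_pos (by omega)] at hth
      rcases zmod2_cases (q ⟨i-1, hkn⟩) with h1 | h1 <;>
        rcases zmod2_cases (q' ⟨i-1, hkn⟩) with h2 | h2 <;>
        rw [h1, h2] at hth <;> revert hth <;> decide
    · have hlt : i' < i := by omega
      have hkn : i' - 1 < n := by omega
      have hth := hsum ⟨i'-1, hkn⟩
      simp only [flipUpTo] at hth
      rw [if_pos (by omega), if_pos (by omega), if_neg (by omega),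
        if_pos (by omega)] at hth
      rcases zmod2_cases (q ⟨i'-1, hkn⟩) with h1 | h1 <;>
        rcases zmod2_cases (q' ⟨i'-1, hkn⟩) with h2 | h2 <;>
        rw [h1, h2] at hth <;> revert hth <;> decide
  subst hii'
  refine ⟨?_, rfl⟩
  rcases h with ⟨ha, hb⟩ | ⟨ha, hb⟩
  · -- straight case: flipUpTo q i = flipUpTo q' i gives q = q'
    funext j
    have hth := congrFun hb j
    simp only [flipUpTo] at hth
    by_cases hj : (j : ℕ) < i
    · rw [if_pos hj, if_pos hj] at hth
      exact add_right_cancel hth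
    · rw [if_neg hj, if_neg hj] at hth
      exact hth
  · -- swapped case: q and q' differ in exactly one coordinate, parity contradiction
    exfalso
    have hkn : i - 1 < n := by omega
    have h11 : (1 : ZMod 2) + 1 = 0 := by decide
    have hqq' : ∀ j : Fin n, q' j = q j + (if (j : ℕ) = i - 1 then 1 else 0) := by
      intro j
      have hth := congrFun ha j
      simp only [flipUpTo] at hth
      rcases Nat.lt_trichotomy (j : ℕ) (i - 1) with hj | hj | hj
      · rw [if_pos hj, if_pos (by omega)] at hth
        rw [if_neg (by omega), add_zero]
        exact (add_right_cancel hth).symm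
      · rw [if_neg (by omega), if_pos (by omega)] at hth
        rw [if_pos hj, hth, add_assoc, h11, add_zero]
      · rw [if_neg (by omega), if_neg (by omega)] at hth
        rw [if_neg (by omega), add_zero]
        exact hth.symm
    have hs : ∑ j, q' j = (∑ j, q j) + 1 := by
      calc ∑ j, q' j = ∑ j : Fin n, (q j + if (j : ℕ) = i - 1 then 1 else 0) :=
            Finset.sum_congr rfl (fun j _ => hqq' j)
        _ = (∑ j, q j) + ∑ j : Fin n, (if (j : ℕ) = i - 1 then (1 : ZMod 2) else 0) :=
            Finset.sum_add_distrib
        _ = (∑ j, q j) + ∑ j : Fin n, (if j = (⟨i-1, hkn⟩ : Fin n) then (1 : ZMod 2) else 0) := by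
            congr 1
            refine Finset.sum_congr rfl fun j _ => ?_
            by_cases hj : (j : ℕ) = i - 1 <;> simp [hj, Fin.ext_iff]
        _ = (∑ j, q j) + 1 := by rw [Finset.sum_ite_eq']; simp
    rw [(even_weight_iff q').mp hq', (even_weight_iff q).mp hq, zero_add] at hs
    exact one_ne_zero hs.symm
end

section
/- If Q_i and Q_j can each be decomposed into paths of length k, then Q_{i+j} can be decomposed into paths of length k. -/
/-- A decomposition of a graph `G` into paths of length `k`: a family of paths,
each with `k` edges, such that every edge of `G` lies in exactly one of them. -/
def PathDecomp {V : Type*} (G : SimpleGraph V) (k : ℕ) : Prop :=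
  ∃ (ι : Type) (u v : ι → V) (w : ∀ i : ι, G.Walk (u i) (v i)),
    (∀ i, (w i).IsPath ∧ (w i).length = k) ∧
    ∀ e ∈ G.edgeSet, ∃! i, e ∈ (w i).edges

/-!
Under `Fin.appendEquiv`, `Q (i + j)` is the box product `Q i □ Q j`. The edge set of a box
product `G □ H` is the disjoint union of the layers `G × {b}` and `{a} × H`; transporting path
decompositions of `G` and `H` into every layer decomposes `G □ H`.
-/

open SimpleGraph Function

theorem hammingDist_append {β : Type*} [DecidableEq β] {m n : ℕ} (a c : Fin m → β)
    (b d : Fin n → β) :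
    hammingDist (Fin.append a b) (Fin.append c d) = hammingDist a c + hammingDist b d := by
  simp only [hammingDist, Finset.card_filter, Fin.sum_univ_add, Fin.append_left,
    Fin.append_right]

namespace SimpleGraph

variable {α β : Type*} (G : SimpleGraph α) (H : SimpleGraph β)

@[simp] lemma map_sectL_adj (b : β) {x y : α × β} :
    (G.map (Embedding.sectL α b)).Adj x y ↔ G.Adj x.1 y.1 ∧ x.2 = b ∧ y.2 = b := by
  obtain ⟨a₁, b₁⟩ := x; obtain ⟨a₂, b₂⟩ := y
  simp only [map_adj, Embedding.sectL_apply, Prod.mk.injEq]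
  aesop

@[simp] lemma map_sectR_adj (a : α) {x y : α × β} :
    (H.map (Embedding.sectR a β)).Adj x y ↔ H.Adj x.2 y.2 ∧ x.1 = a ∧ y.1 = a := by
  obtain ⟨a₁, b₁⟩ := x; obtain ⟨a₂, b₂⟩ := y
  simp only [map_adj, Embedding.sectR_apply, Prod.mk.injEq]
  aesop

lemma boxProd_eq_sup_iSup :
    G.boxProd H =
      (⨆ b, G.map (Embedding.sectL α b)) ⊔ ⨆ a, H.map (Embedding.sectR a β) := by
  ext ⟨a₁, b₁⟩ ⟨a₂, b₂⟩
  simp only [boxProd_adj, sup_adj, iSup_adj, map_sectL_adj, map_sectR_adj]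
  aesop

lemma pairwise_disjoint_map_sectL :
    Pairwise (Disjoint on fun b : β ↦ G.map (Embedding.sectL α b)) :=
  fun _ _ hne ↦ disjoint_left.mpr fun _ _ h h' ↦
    hne (((map_sectL_adj G _).mp h).2.1.symm.trans ((map_sectL_adj G _).mp h').2.1)

lemma pairwise_disjoint_map_sectR :
    Pairwise (Disjoint on fun a : α ↦ H.map (Embedding.sectR a β)) :=
  fun _ _ hne ↦ disjoint_left.mpr fun _ _ h h' ↦
    hne (((map_sectR_adj H _).mp h).2.1.symm.trans ((map_sectR_adj H _).mp h').2.1)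

lemma disjoint_iSup_map_sectL_iSup_map_sectR :
    Disjoint (⨆ b, G.map (Embedding.sectL α b)) (⨆ a, H.map (Embedding.sectR a β)) := by
  refine disjoint_left.mpr fun x y hG hH ↦ ?_
  obtain ⟨b, hGb⟩ := iSup_adj.mp hG
  obtain ⟨a, hHa⟩ := iSup_adj.mp hH
  rw [map_sectL_adj] at hGb
  rw [map_sectR_adj] at hHa
  exact hGb.1.ne (hHa.2.1.trans hHa.2.2.symm)

end SimpleGraph

namespace PathDecomp

variable {V W : Type*} {k : ℕ}

theorem map {G : SimpleGraph V} (f : V ↪ W) (hG : PathDecomp G k) : PathDecomp (G.map f) k := by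
  obtain ⟨ι, u, v, w, hw, hcover⟩ := hG
  refine ⟨ι, _, _, fun t ↦ (w t).map (Embedding.map f G).toHom,
    fun t ↦ ⟨(hw t).1.map f.injective, (Walk.length_map _ _).trans (hw t).2⟩, ?_⟩
  intro _ hfe
  obtain ⟨e, he, rfl⟩ := edgeSet_map f G ▸ hfe
  have hedges (t : ι) :
      ((w t).map (Embedding.map f G).toHom).edges = (w t).edges.map (Sym2.map f) :=
    Walk.edges_map _ _
  simpa only [Embedding.sym2Map_apply, hedges,
    List.mem_map_of_injective (Sym2.map.injective f.injective)] using hcover e he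

theorem iSup {α : Type} {H : α → SimpleGraph W} (hdisj : Pairwise (Disjoint on H))
    (hH : ∀ a, PathDecomp (H a) k) : PathDecomp (⨆ a, H a) k := by
  choose ι u v w hw hcover using hH
  refine ⟨Σ a, ι a, fun t ↦ u t.1 t.2, fun t ↦ v t.1 t.2,
    fun t ↦ (w t.1 t.2).mapLe (le_iSup H t.1),
    fun t ↦ ⟨(hw t.1 t.2).1.mapLe _, by simp [(hw t.1 t.2).2]⟩, ?_⟩
  intro e he
  obtain ⟨a, he⟩ := Set.mem_iUnion.mp (edgeSet_iSup ▸ he)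
  obtain ⟨t, ht, huniq⟩ := hcover a e he
  refine ⟨⟨a, t⟩, by simpa only [Walk.edges_mapLe_eq_edges] using ht, ?_⟩
  rintro ⟨b, s⟩ hs
  rw [Walk.edges_mapLe_eq_edges] at hs
  obtain rfl : b = a := hdisj.eq fun hba ↦
    (disjoint_edgeSet.mpr hba).ne_of_mem ((w b s).edges_subset_edgeSet hs) he rfl
  rw [huniq s hs]

theorem sup {H₁ H₂ : SimpleGraph W} (hdisj : Disjoint H₁ H₂) (h₁ : PathDecomp H₁ k)
    (h₂ : PathDecomp H₂ k) : PathDecomp (H₁ ⊔ H₂) k := by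
  rw [sup_eq_iSup]
  exact .iSup (pairwise_disjoint_on_bool.mpr hdisj) (Bool.forall_bool.mpr ⟨h₂, h₁⟩)

theorem boxProd {α β : Type} {G : SimpleGraph α} {H : SimpleGraph β} (hG : PathDecomp G k)
    (hH : PathDecomp H k) : PathDecomp (G.boxProd H) k := by
  rw [boxProd_eq_sup_iSup]
  exact .sup (disjoint_iSup_map_sectL_iSup_map_sectR G H)
    (.iSup (pairwise_disjoint_map_sectL G) fun _ ↦ hG.map _)
    (.iSup (pairwise_disjoint_map_sectR H) fun _ ↦ hH.map _)

end PathDecomp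

theorem Q_add_eq_map_boxProd (m n : ℕ) :
    Q (m + n) = ((Q m).boxProd (Q n)).map (Fin.appendEquiv m n).toEmbedding := by
  ext x y
  obtain ⟨⟨a, b⟩, rfl⟩ := (Fin.appendEquiv m n).surjective x
  obtain ⟨⟨c, d⟩, rfl⟩ := (Fin.appendEquiv m n).surjective y
  rw [← Equiv.coe_toEmbedding, map_adj_apply, boxProd_adj]
  change hammingDist (Fin.append a b) (Fin.append c d) = 1 ↔
    hammingDist a c = 1 ∧ b = d ∨ hammingDist b d = 1 ∧ a = c
  rw [hammingDist_append, Nat.add_eq_one_iff, hammingDist_eq_zero, hammingDist_eq_zero]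
  tauto

theorem decomp_add (i j k : ℕ) (hi : PathDecomp (Q i) k) (hj : PathDecomp (Q j) k) :
    PathDecomp (Q (i + j)) k := by
  rw [Q_add_eq_map_boxProd]
  exact (hi.boxProd hj).map _
end

section
/- Q_5 can be decomposed into paths of length 4. -/
/-!
A walk in `Q n` is determined by its start vertex and the list of coordinates it flips in turn.
Four such paths of length 4 in `Q 5`, together with their images under the five cyclic shifts
of the coordinates, give 20 pairwise edge-disjoint paths with 80 edges in all. Since `Q 5` is
5-regular on 32 vertices it has exactly 80 edges, so these paths cover every edge exactly once.
-/
instance (n : ℕ) : DecidableRel (Q n).Adj :=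
  fun x y => inferInstanceAs (Decidable (hammingDist x y = 1))

open Finset

namespace Q

variable {n : ℕ}

lemma adj_iff_exists_eq_add_single {x y : Fin n → ZMod 2} :
    (Q n).Adj x y ↔ ∃ i, y = x + Pi.single i 1 := by
  have hz : ∀ a b : ZMod 2, a ≠ b ↔ b = a + 1 := by decide
  have key : ∀ i, (∀ j, x j ≠ y j ↔ j = i) ↔ y = x + Pi.single i 1 := fun i => by
    rw [funext_iff]
    refine forall_congr' fun j => ?_
    by_cases hj : j = i
    · subst hj; simp [hz]
    · simp [hj, eq_comm]
  change #{j | x j ≠ y j} = 1 ↔ _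
  simp only [Finset.card_eq_one, Finset.ext_iff, Finset.mem_filter, Finset.mem_univ, true_and,
    Finset.mem_singleton, key]

lemma adj_add_single (x : Fin n → ZMod 2) (i : Fin n) : (Q n).Adj x (x + Pi.single i 1) :=
  adj_iff_exists_eq_add_single.2 ⟨i, rfl⟩

lemma degree_eq (x : Fin n → ZMod 2) : (Q n).degree x = n := by
  have hinj : Function.Injective fun i : Fin n => x + Pi.single i 1 := fun i j h => by
    simpa [Pi.single_apply, eq_comm] using congrFun h i
  have : (Q n).neighborFinset x = Finset.univ.image fun i => x + Pi.single i 1 := by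
    ext y
    simp [adj_iff_exists_eq_add_single, eq_comm]
  rw [← SimpleGraph.card_neighborFinset_eq_degree, this, Finset.card_image_of_injective _ hinj,
    Finset.card_univ, Fintype.card_fin]

lemma two_mul_card_edgeFinset : 2 * #(Q n).edgeFinset = n * 2 ^ n := by
  rw [← SimpleGraph.sum_degrees_eq_twice_card_edges]
  simp [degree_eq, ZMod.card, mul_comm]

def flipEnd (x : Fin n → ZMod 2) (ds : List (Fin n)) : Fin n → ZMod 2 :=
  ds.foldl (fun y i => y + Pi.single i 1) x

def flipWalk : (x : Fin n → ZMod 2) → (ds : List (Fin n)) → (Q n).Walk x (flipEnd x ds)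
  | _, [] => .nil
  | x, i :: ds => .cons (adj_add_single x i) (flipWalk (x + Pi.single i 1) ds)

@[simp]
lemma length_flipWalk (x : Fin n → ZMod 2) (ds : List (Fin n)) :
    (flipWalk x ds).length = ds.length := by
  induction ds generalizing x with
  | nil => rfl
  | cons i ds ih => exact congrArg (· + 1) (ih _)

end Q

lemma pathDecomp_of_nodup_flatMap_edges {V ι : Type} [Fintype V] [DecidableEq V]
    {G : SimpleGraph V} [DecidableRel G.Adj] {k : ℕ} {u v : ι → V}
    (w : ∀ i, G.Walk (u i) (v i)) (l : List ι) (hl : ∀ i, i ∈ l)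
    (hpath : ∀ i, (w i).IsPath) (hlen : ∀ i, (w i).length = k)
    (hnodup : (l.flatMap fun i => (w i).edges).Nodup) (hcard : #G.edgeFinset ≤ l.length * k) :
    PathDecomp G k := by
  set L := l.flatMap fun i => (w i).edges
  have hsub : L.toFinset ⊆ G.edgeFinset := fun e he => by
    obtain ⟨i, -, hi⟩ := List.mem_flatMap.1 (List.mem_toFinset.1 he)
    exact SimpleGraph.mem_edgeFinset.2 ((w i).edges_subset_edgeSet hi)
  have hL : L.toFinset = G.edgeFinset := by
    refine Finset.eq_of_subset_of_card_le hsub ?_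
    rw [List.toFinset_card_of_nodup hnodup, List.length_flatMap]
    simpa [SimpleGraph.Walk.length_edges, hlen, mul_comm] using hcard
  have hdisj := (List.nodup_flatMap.1 hnodup).2
  have : Std.Symm (Function.onFun List.Disjoint fun i => (w i).edges) :=
    ⟨fun _ _ h => List.Disjoint.symm h⟩
  refine ⟨ι, u, v, w, fun i => ⟨hpath i, hlen i⟩, fun e he => ?_⟩
  rw [← SimpleGraph.mem_edgeFinset, ← hL, List.mem_toFinset, List.mem_flatMap] at he
  obtain ⟨i, -, hi⟩ := he
  refine ⟨i, hi, fun j hj => ?_⟩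
  by_contra hji
  exact hdisj.forall (hl j) (hl i) hji hj hi

-- Path `(k, j)` is the `j`-th of four base paths with the coordinates shifted cyclically by `k`;
-- the shift turns a flip of coordinate `d` into a flip of coordinate `d + k`.
def q5Start (p : Fin 5 × Fin 4) : Fin 5 → ZMod 2 := fun i =>
  ![![0, 0, 0, 0, 0], ![1, 0, 0, 0, 0], ![1, 1, 0, 0, 0], ![1, 1, 0, 1, 0]] p.2 (i - p.1)

def q5Flips (p : Fin 5 × Fin 4) : List (Fin 5) :=
  (![[0, 1, 0, 3], [3, 1, 0, 2], [2, 0, 4, 0], [2, 0, 4, 0]] p.2).map (· + p.1)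

def q5Path (p : Fin 5 × Fin 4) : (Q 5).Walk (q5Start p) (Q.flipEnd (q5Start p) (q5Flips p)) :=
  Q.flipWalk (q5Start p) (q5Flips p)

lemma q5Path_isPath : ∀ p, (q5Path p).IsPath := by
  simp only [SimpleGraph.Walk.isPath_def]
  decide +kernel

lemma q5Path_length : ∀ p, (q5Path p).length = 4 := by
  rintro ⟨k, j⟩
  simp only [q5Path, Q.length_flipWalk, q5Flips, List.length_map]
  fin_cases j <;> rfl

lemma q5Path_edges_nodup :
    ((List.finRange 5 ×ˢ List.finRange 4).flatMap fun p => (q5Path p).edges).Nodup := by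
  decide +kernel

theorem q5_decomp : PathDecomp (Q 5) 4 := by
  refine pathDecomp_of_nodup_flatMap_edges q5Path (List.finRange 5 ×ˢ List.finRange 4)
    (by simp) q5Path_isPath q5Path_length q5Path_edges_nodup ?_
  have hcard := Q.two_mul_card_edgeFinset (n := 5)
  simp only [List.length_product, List.length_finRange]
  omega
end
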